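/- For any *-term P ∧❛ Q (with P a *-term and Q in the category P^d), se(P ∧❛ Q) has the unique conjunction decomposition (se(P)[T↦△], se(Q)) and no disjunction decomposition. For any *-term P ∨❛ Q (with P a *-term and Q in the category P^c), se(P ∨❛ Q) has no conjunction decomposition and its unique disjunction decomposition is (se(P)[F↦△], se(Q)). -/

import Mathlib

/-- Evaluation trees over a set `A` of atoms, with leaves `T` and `F`. -/
inductive ETree (A : Type) : Type
  | leafT : ETree A
  | leafF : ETree A
  | node : ETree A → A → ETree A → ETree A

namespace ETree

/-- Leaf replacement `X[T↦Y, F↦Z]`. -/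
def repl {A : Type} : ETree A → ETree A → ETree A → ETree A
  | leafT, y, _ => y
  | leafF, _, z => z
  | node l a r, y, z => node (repl l y z) a (repl r y z)

end ETree

namespace ETree

/-- The tree contains the leaf `T`. -/
def hasT {A : Type} : ETree A → Prop
  | leafT => True
  | leafF => False
  | node l _ r => hasT l ∨ hasT r

/-- The tree contains the leaf `F`. -/
def hasF {A : Type} : ETree A → Prop
  | leafT => False
  | leafF => True
  | node l _ r => hasF l ∨ hasF r

end ETree

namespace ETree

/-- Depth of an evaluation tree. -/
def depth {A : Type} : ETree A → ℕ
  | leafT => 0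
  | leafF => 0
  | node l _ r => 1 + max (depth l) (depth r)

end ETree

/-- Closed sequential propositional statements over `A`:
`P ::= a | T | F | ¬P | P ∧❛ P | P ∨❛ P`. -/
inductive STerm (A : Type) : Type
  | atom : A → STerm A
  | tt : STerm A
  | ff : STerm A
  | neg : STerm A → STerm A
  | and : STerm A → STerm A → STerm A
  | or : STerm A → STerm A → STerm A

/-- The short-circuit evaluation function `se : S_A → T_A`. -/
def se {A : Type} : STerm A → ETree A
  | .tt => .leafT
  | .ff => .leafF
  | .atom a => .node .leafT a .leafF
  | .neg P => (se P).repl .leafF .leafT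
  | .and P Q => (se P).repl (se Q) .leafF
  | .or P Q => (se P).repl .leafT (se Q)

/-- T-terms: `P^T ::= T | (a ∧❛ P^T) ∨❛ P^T`. -/
inductive IsTTerm {A : Type} : STerm A → Prop
  | tt : IsTTerm .tt
  | node (a : A) {P Q} : IsTTerm P → IsTTerm Q → IsTTerm (.or (.and (.atom a) P) Q)

/-- F-terms: `P^F ::= F | (a ∨❛ P^F) ∧❛ P^F`. -/
inductive IsFTerm {A : Type} : STerm A → Prop
  | ff : IsFTerm .ff
  | node (a : A) {P Q} : IsFTerm P → IsFTerm Q → IsFTerm (.and (.or (.atom a) P) Q)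

/-- ℓ-terms: `P^ℓ ::= (a ∧❛ P^T) ∨❛ P^F | (¬a ∧❛ P^T) ∨❛ P^F`. -/
inductive IsLTerm {A : Type} : STerm A → Prop
  | pos (a : A) {P Q} : IsTTerm P → IsFTerm Q → IsLTerm (.or (.and (.atom a) P) Q)
  | neg (a : A) {P Q} : IsTTerm P → IsFTerm Q → IsLTerm (.or (.and (.neg (.atom a)) P) Q)

mutual
/-- The category `P^c ::= P^ℓ | P^* ∧❛ P^d`. -/
inductive IsCTerm {A : Type} : STerm A → Prop
  | ell {P} : IsLTerm P → IsCTerm P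
  | and {P Q} : IsStarTerm P → IsDTerm Q → IsCTerm (.and P Q)

/-- The category `P^d ::= P^ℓ | P^* ∨❛ P^c`. -/
inductive IsDTerm {A : Type} : STerm A → Prop
  | ell {P} : IsLTerm P → IsDTerm P
  | or {P Q} : IsStarTerm P → IsCTerm Q → IsDTerm (.or P Q)

/-- *-terms: `P^* ::= P^c | P^d`. -/
inductive IsStarTerm {A : Type} : STerm A → Prop
  | c {P} : IsCTerm P → IsStarTerm P
  | d {P} : IsDTerm P → IsStarTerm P
end

/-- Binary trees over `A` with leaves in `{T, F, △}`. -/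
inductive DTree (A : Type) : Type
  | leafT : DTree A
  | leafF : DTree A
  | leafD : DTree A
  | node : DTree A → A → DTree A → DTree A

namespace DTree

/-- `X[△↦Z]`: replace every `△`-leaf of `X` by the evaluation tree `Z`. -/
def substD {A : Type} : DTree A → ETree A → ETree A
  | leafT, _ => .leafT
  | leafF, _ => .leafF
  | leafD, z => z
  | node l a r, z => .node (substD l z) a (substD r z)

/-- The tree contains the leaf `T`. -/
def hasT {A : Type} : DTree A → Prop
  | leafT => True
  | leafF => False
  | leafD => False
  | node l _ r => hasT l ∨ hasT r

/-- The tree contains the leaf `F`. -/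
def hasF {A : Type} : DTree A → Prop
  | leafT => False
  | leafF => True
  | leafD => False
  | node l _ r => hasF l ∨ hasF r

/-- The tree contains the leaf `△`. -/
def hasD {A : Type} : DTree A → Prop
  | leafT => False
  | leafF => False
  | leafD => True
  | node l _ r => hasD l ∨ hasD r

end DTree

namespace ETree

/-- `X[T↦△]`: replace every `T`-leaf by `△`. -/
def replTD {A : Type} : ETree A → DTree A
  | leafT => .leafD
  | leafF => .leafF
  | node l a r => .node (replTD l) a (replTD r)

/-- `X[F↦△]`: replace every `F`-leaf by `△`. -/
def replFD {A : Type} : ETree A → DTree A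
  | leafT => .leafT
  | leafF => .leafD
  | node l a r => .node (replFD l) a (replFD r)

end ETree

/-- `(Y, Z)` is a candidate conjunction decomposition (ccd) of `X`. -/
def IsCCD {A : Type} (Y : DTree A) (Z : ETree A) (X : ETree A) : Prop :=
  X = Y.substD Z ∧ Y.hasD ∧ Y.hasF ∧ ¬ Y.hasT ∧ Z.hasT ∧ Z.hasF

/-- `(Y, Z)` is a candidate disjunction decomposition (cdd) of `X`. -/
def IsCDD {A : Type} (Y : DTree A) (Z : ETree A) (X : ETree A) : Prop :=
  X = Y.substD Z ∧ Y.hasD ∧ Y.hasT ∧ ¬ Y.hasF ∧ Z.hasT ∧ Z.hasF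

/-- `(Y, Z)` is a conjunction decomposition (cd) of `X`: a ccd such that no ccd has a
second component of smaller depth. -/
def IsCD {A : Type} (Y : DTree A) (Z : ETree A) (X : ETree A) : Prop :=
  IsCCD Y Z X ∧ ∀ (Y' : DTree A) (Z' : ETree A), IsCCD Y' Z' X → ¬ Z'.depth < Z.depth

/-- `(Y, Z)` is a disjunction decomposition (dd) of `X`: a cdd such that no cdd has a
second component of smaller depth. -/
def IsDD {A : Type} (Y : DTree A) (Z : ETree A) (X : ETree A) : Prop :=
  IsCDD Y Z X ∧ ∀ (Y' : DTree A) (Z' : ETree A), IsCDD Y' Z' X → ¬ Z'.depth < Z.depth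

/-!
Write `se (P ∧❛ Q) = S[T↦W, F↦F]` with `S = se P` and `W = se Q`; both contain `T` and `F`.
The invariant behind the theorem is irreducibility: `W` has no decomposition `W = Y[△↦Z]` with a
`T`-free context `Y ≠ △` and `Z` containing `T` and `F` (dually for `F`-free contexts). Granting
it, a `T`-free decomposition `(Y, Z)` of `S[T↦W]` either has `Z = W`, and then `Y = S[T↦△]`, or
`Z` strictly deeper than `W`; this gives the unique cd. There is no cdd: an `F`-leaf of `S` forces
`d(Z) ≥ d(W)`, while a `T`-leaf of `Y` lies in a copy of `W` that `Y` splits, forcing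
`d(Z) < d(W)`. Irreducibility itself propagates through the grammar by the same depth argument:
an `F`-free context of `S[T↦W]` cannot contain `T`, and a context with only `△`-leaves descends to
a decomposition of `S`, excluded by the irreducibility of `S`. Swapping `T` and `F` turns the
disjunctive half into the conjunctive one.
-/

attribute [simp] ETree.repl ETree.hasT ETree.hasF ETree.depth ETree.replTD ETree.replFD
  DTree.substD DTree.hasT DTree.hasF DTree.hasD

section

variable {A : Type}

namespace ETree

@[simp]
def swap : ETree A → ETree A
  | leafT => leafF
  | leafF => leafT
  | node l a r => node l.swap a r.swap

@[simp]
theorem swap_swap (X : ETree A) : X.swap.swap = X := by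
  induction X <;> simp_all

theorem swap_involutive : Function.Involutive (swap : ETree A → ETree A) := swap_swap

@[simp]
theorem hasT_swap (X : ETree A) : X.swap.hasT ↔ X.hasF := by
  induction X <;> simp_all

@[simp]
theorem hasF_swap (X : ETree A) : X.swap.hasF ↔ X.hasT := by
  induction X <;> simp_all

@[simp]
theorem depth_swap (X : ETree A) : X.swap.depth = X.depth := by
  induction X <;> simp_all

theorem swap_repl (X Y Z : ETree A) : (X.repl Y Z).swap = X.swap.repl Z.swap Y.swap := by
  induction X <;> simp_all

theorem hasT_or_hasF : ∀ X : ETree A, X.hasT ∨ X.hasF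
  | leafT => .inl trivial
  | leafF => .inr trivial
  | node l _ _ => (hasT_or_hasF l).imp .inl .inl

theorem hasT_repl (X Y Z : ETree A) :
    (X.repl Y Z).hasT ↔ X.hasT ∧ Y.hasT ∨ X.hasF ∧ Z.hasT := by
  induction X <;> simp_all; tauto

theorem hasT_repl_leafF (X Y : ETree A) : (X.repl Y leafF).hasT ↔ X.hasT ∧ Y.hasT := by
  simp [hasT_repl]

theorem hasF_repl (X Y Z : ETree A) :
    (X.repl Y Z).hasF ↔ X.hasT ∧ Y.hasF ∨ X.hasF ∧ Z.hasF := by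
  induction X <;> simp_all; tauto

end ETree

namespace DTree

@[simp]
def swap : DTree A → DTree A
  | leafT => leafF
  | leafF => leafT
  | leafD => leafD
  | node l a r => node l.swap a r.swap

@[simp]
theorem swap_swap (Y : DTree A) : Y.swap.swap = Y := by
  induction Y <;> simp_all

theorem swap_involutive : Function.Involutive (swap : DTree A → DTree A) := swap_swap

@[simp]
theorem hasT_swap (Y : DTree A) : Y.swap.hasT ↔ Y.hasF := by
  induction Y <;> simp_all

@[simp]
theorem hasF_swap (Y : DTree A) : Y.swap.hasF ↔ Y.hasT := by
  induction Y <;> simp_all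

@[simp]
theorem hasD_swap (Y : DTree A) : Y.swap.hasD ↔ Y.hasD := by
  induction Y <;> simp_all

theorem swap_substD (Y : DTree A) (Z : ETree A) : (Y.substD Z).swap = Y.swap.substD Z.swap := by
  induction Y <;> simp_all

theorem hasT_substD (Y : DTree A) (Z : ETree A) :
    (Y.substD Z).hasT ↔ Y.hasT ∨ Y.hasD ∧ Z.hasT := by
  induction Y <;> simp_all; tauto

theorem hasF_substD (Y : DTree A) (Z : ETree A) :
    (Y.substD Z).hasF ↔ Y.hasF ∨ Y.hasD ∧ Z.hasF := by
  induction Y <;> simp_all; tauto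

theorem depth_le_depth_substD {Y : DTree A} (Z : ETree A) (hY : Y.hasD) :
    Z.depth ≤ (Y.substD Z).depth := by
  induction Y with
  | node l a r ihl ihr =>
    simp only [hasD, substD, ETree.depth] at hY ⊢
    rcases hY with h | h
    · exact (ihl h).trans (by omega)
    · exact (ihr h).trans (by omega)
  | _ => simp_all

theorem depth_lt_depth_substD {Y : DTree A} (Z : ETree A) (hY : Y.hasD) (hne : Y ≠ leafD) :
    Z.depth < (Y.substD Z).depth := by
  cases Y with
  | node l a r =>
    simp only [hasD, substD, ETree.depth] at hY ⊢
    rcases hY with h | h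
    · exact (depth_le_depth_substD Z h).trans_lt (by omega)
    · exact (depth_le_depth_substD Z h).trans_lt (by omega)
  | _ => simp_all

theorem eq_leafD_of_substD_eq_self {W : ETree A} {Y : DTree A} (hW : W.hasT) (hY : ¬ Y.hasT)
    (h : Y.substD W = W) : Y = leafD := by
  by_contra hne
  have hYD : Y.hasD := by
    have := (hasT_substD Y W).1 (by rwa [h])
    tauto
  exact (depth_lt_depth_substD W hYD hne).ne' (congrArg ETree.depth h)

theorem eq_of_substD_eq {W : ETree A} {Y Y' : DTree A} (hW : W.hasT) (hY : ¬ Y.hasT)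
    (hY' : ¬ Y'.hasT) (h : Y.substD W = Y'.substD W) : Y = Y' := by
  induction Y generalizing Y' with
  | leafD => exact (eq_leafD_of_substD_eq_self hW hY' h.symm).symm
  | node l a r ihl ihr =>
    cases Y' with
    | leafD => exact eq_leafD_of_substD_eq_self hW hY h
    | node l' a' r' =>
      simp only [substD, ETree.node.injEq] at h
      simp only [hasT, not_or] at hY hY'
      rw [ihl hY.1 hY'.1 h.1, h.2.1, ihr hY.2 hY'.2 h.2.2]
    | _ => simp at h
  | _ => cases Y' <;> simp_all <;> simp [← h] at hW

end DTree

namespace ETree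

@[simp]
theorem substD_replTD (X Z : ETree A) : X.replTD.substD Z = X.repl Z leafF := by
  induction X <;> simp_all

@[simp]
theorem hasD_replTD (X : ETree A) : X.replTD.hasD ↔ X.hasT := by
  induction X <;> simp_all

@[simp]
theorem hasF_replTD (X : ETree A) : X.replTD.hasF ↔ X.hasF := by
  induction X <;> simp_all

@[simp]
theorem not_hasT_replTD (X : ETree A) : ¬ X.replTD.hasT := by
  induction X <;> simp_all

theorem swap_replTD (X : ETree A) : X.swap.replTD = X.replFD.swap := by
  induction X <;> simp_all

theorem replTD_injective : Function.Injective (replTD : ETree A → DTree A) := by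
  intro X X' h
  induction X generalizing X' with
  | node l a r ihl ihr =>
    cases X' <;> simp only [replTD, node.injEq, DTree.node.injEq, reduceCtorEq] at h ⊢
    exact ⟨ihl h.1, h.2.1, ihr h.2.2⟩
  | _ => cases X' <;> simp_all

theorem depth_lt_depth_repl {X : ETree A} (W : ETree A) (hX : X.hasT) (hne : X ≠ leafT) :
    W.depth < (X.repl W leafF).depth := by
  rw [← substD_replTD]
  exact DTree.depth_lt_depth_substD W (by simpa) (by cases X <;> simp_all)

theorem repl_leafF_injective {W : ETree A} (hW : W.hasT) :
    Function.Injective fun X : ETree A => X.repl W leafF := fun X X' h =>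
  replTD_injective <| DTree.eq_of_substD_eq hW (not_hasT_replTD X) (not_hasT_replTD X') <| by
    simpa using h

end ETree

theorem isCCD_swap_iff {X Z : ETree A} {Y : DTree A} :
    IsCCD Y.swap Z.swap X.swap ↔ IsCDD Y Z X := by
  simp only [IsCCD, IsCDD, ← DTree.swap_substD, ETree.swap_involutive.injective.eq_iff,
    DTree.hasT_swap, DTree.hasF_swap, DTree.hasD_swap, ETree.hasT_swap, ETree.hasF_swap]
  tauto

theorem isCDD_swap_iff {X Z : ETree A} {Y : DTree A} :
    IsCDD Y.swap Z.swap X.swap ↔ IsCCD Y Z X := by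
  simpa using (isCCD_swap_iff (X := X.swap) (Y := Y.swap) (Z := Z.swap)).symm

theorem isCD_swap_iff {X Z : ETree A} {Y : DTree A} :
    IsCD Y.swap Z.swap X.swap ↔ IsDD Y Z X := by
  rw [IsCD, IsDD, isCCD_swap_iff, DTree.swap_involutive.surjective.forall]
  refine and_congr_right' (forall_congr' fun Y' => ?_)
  rw [ETree.swap_involutive.surjective.forall]
  simp only [isCCD_swap_iff, ETree.depth_swap]

namespace ETree

def ConjIrreducible (W : ETree A) : Prop :=
  ∀ (Y : DTree A) (Z : ETree A), ¬ Y.hasT → Y.hasD → Z.hasT → Z.hasF → W = Y.substD Z →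
    Y = .leafD

def DisjIrreducible (W : ETree A) : Prop :=
  ∀ (Y : DTree A) (Z : ETree A), ¬ Y.hasF → Y.hasD → Z.hasT → Z.hasF → W = Y.substD Z →
    Y = .leafD

theorem conjIrreducible_swap_iff {W : ETree A} : W.swap.ConjIrreducible ↔ W.DisjIrreducible := by
  constructor
  · intro h Y Z hYF hYD hZT hZF hW
    have := h Y.swap Z.swap (by simpa) (by simpa) (by simpa) (by simpa)
      (by rw [hW, DTree.swap_substD])
    simpa using congrArg DTree.swap this
  · intro h Y Z hYT hYD hZT hZF hW
    have := h Y.swap Z.swap (by simpa) (by simpa) (by simpa) (by simpa)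
      (by rw [← DTree.swap_substD, ← hW, swap_swap])
    simpa using congrArg DTree.swap this

section Decomposition

variable {S W Z : ETree A} {Y : DTree A}

theorem eq_or_depth_lt_of_repl_eq_substD (hW : W.ConjIrreducible) (hYT : ¬ Y.hasT) (hYD : Y.hasD)
    (hZT : Z.hasT) (hZF : Z.hasF) (h : S.repl W leafF = Y.substD Z) :
    Z = W ∨ W.depth < Z.depth := by
  induction S generalizing Y with
  | leafT =>
    obtain rfl := hW Y Z hYT hYD hZT hZF h
    exact .inl h.symm
  | leafF => cases Y <;> simp only [repl, DTree.substD] at h <;> subst_vars <;> simp_all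
  | node l a r ihl ihr =>
    cases Y with
    | leafD =>
      subst h
      exact .inr (depth_lt_depth_repl W ((hasT_repl_leafF _ _).1 hZT).1 (by simp))
    | node Y₁ b Y₂ =>
      simp only [repl, DTree.substD, node.injEq] at h
      simp only [DTree.hasT, DTree.hasD, not_or] at hYT hYD
      exact hYD.elim (ihl hYT.1 · h.1) (ihr hYT.2 · h.2.2)
    | _ => simp_all

theorem depth_le_of_repl_eq_substD (hS : S.hasF) (hYF : ¬ Y.hasF) (hZT : Z.hasT)
    (h : S.repl W leafF = Y.substD Z) : W.depth ≤ Z.depth := by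
  induction S generalizing Y with
  | leafT => simp at hS
  | leafF => cases Y <;> simp only [repl, DTree.substD] at h <;> subst_vars <;> simp_all
  | node l a r ihl ihr =>
    cases Y with
    | leafD =>
      subst h
      exact (depth_lt_depth_repl W ((hasT_repl_leafF _ _).1 hZT).1 (by simp)).le
    | node Y₁ b Y₂ =>
      simp only [repl, DTree.substD, node.injEq] at h
      simp only [hasF, DTree.hasF, not_or] at hS hYF
      exact hS.elim (ihl · hYF.1 h.1) (ihr · hYF.2 h.2.2)
    | _ => simp_all

theorem depth_lt_of_repl_eq_substD (hWF : W.hasF) (hYT : Y.hasT) (hYF : ¬ Y.hasF)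
    (h : S.repl W leafF = Y.substD Z) : Z.depth < W.depth := by
  induction S generalizing Y with
  | leafT =>
    simp only [repl] at h
    subst h
    have hYD : Y.hasD := by
      have := (DTree.hasF_substD Y Z).1 hWF
      tauto
    exact DTree.depth_lt_depth_substD Z hYD (by rintro rfl; simp at hYT)
  | leafF => cases Y <;> simp only [repl, DTree.substD] at h <;> subst_vars <;> simp_all
  | node l a r ihl ihr =>
    cases Y with
    | node Y₁ b Y₂ =>
      simp only [repl, DTree.substD, node.injEq] at h
      simp only [DTree.hasT, DTree.hasF, not_or] at hYT hYF
      exact hYT.elim (ihl · hYF.1 h.1) (ihr · hYF.2 h.2.2)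
    | _ => simp_all

theorem not_hasT_of_repl_eq_substD (hSF : S.hasF) (hWF : W.hasF) (hYF : ¬ Y.hasF)
    (hZT : Z.hasT) (h : S.repl W leafF = Y.substD Z) : ¬ Y.hasT := fun hYT =>
  (depth_le_of_repl_eq_substD hSF hYF hZT h).not_gt (depth_lt_of_repl_eq_substD hWF hYT hYF h)

theorem exists_eq_substD_of_repl_eq_substD (hW : W.ConjIrreducible) (hWT : W.hasT)
    (hYT : ¬ Y.hasT) (hYF : ¬ Y.hasF) (hZT : Z.hasT) (hZF : Z.hasF)
    (h : S.repl W leafF = Y.substD Z) : ∃ Zₛ, S = Y.substD Zₛ ∧ Z = Zₛ.repl W leafF := by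
  induction S generalizing Y with
  | leafT =>
    simp only [repl] at h
    have hYD : Y.hasD := by
      have := (DTree.hasT_substD Y Z).1 (h ▸ hWT)
      tauto
    obtain rfl := hW Y Z hYT hYD hZT hZF h
    exact ⟨leafT, rfl, h.symm⟩
  | leafF => cases Y <;> simp only [repl, DTree.substD] at h <;> subst_vars <;> simp_all
  | node l a r ihl ihr =>
    cases Y with
    | leafD => exact ⟨node l a r, rfl, h.symm⟩
    | node Y₁ b Y₂ =>
      simp only [repl, DTree.substD, node.injEq] at h
      simp only [DTree.hasT, DTree.hasF, not_or] at hYT hYF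
      obtain ⟨Z₁, rfl, rfl⟩ := ihl hYT.1 hYF.1 h.1
      obtain ⟨Z₂, rfl, hZ⟩ := ihr hYT.2 hYF.2 h.2.2
      obtain rfl := repl_leafF_injective hWT hZ
      exact ⟨Z₁, by simp [h.2.1], rfl⟩
    | _ => simp_all
theorem disjIrreducible_repl_leafF (hS : S.ConjIrreducible ∨ S.DisjIrreducible) (hST : S.hasT)
    (hSF : S.hasF) (hW : W.ConjIrreducible) (hWT : W.hasT) (hWF : W.hasF) :
    (S.repl W leafF).DisjIrreducible := by
  intro Y Z hYF hYD hZT hZF h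
  have hYT := not_hasT_of_repl_eq_substD hSF hWF hYF hZT h
  obtain ⟨Zₛ, rfl, -⟩ := exists_eq_substD_of_repl_eq_substD hW hWT hYT hYF hZT hZF h
  have hZₛT : Zₛ.hasT := by simpa [DTree.hasT_substD, hYT, hYD] using hST
  have hZₛF : Zₛ.hasF := by simpa [DTree.hasF_substD, hYF, hYD] using hSF
  exact hS.elim (· Y Zₛ hYT hYD hZₛT hZₛF rfl) (· Y Zₛ hYF hYD hZₛT hZₛF rfl)

theorem conjIrreducible_repl_leafT (hS : S.ConjIrreducible ∨ S.DisjIrreducible) (hST : S.hasT)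
    (hSF : S.hasF) (hW : W.DisjIrreducible) (hWT : W.hasT) (hWF : W.hasF) :
    (S.repl leafT W).ConjIrreducible := by
  rw [← swap_swap (S.repl leafT W), swap_repl, conjIrreducible_swap_iff]
  refine disjIrreducible_repl_leafF ?_ (by simpa) (by simpa) (by rwa [conjIrreducible_swap_iff])
    (by simpa) (by simpa)
  rw [conjIrreducible_swap_iff, ← conjIrreducible_swap_iff (W := S.swap), swap_swap]
  exact hS.symm

theorem isCD_repl_leafF_iff (hST : S.hasT) (hSF : S.hasF) (hW : W.ConjIrreducible)
    (hWT : W.hasT) (hWF : W.hasF) : IsCD Y Z (S.repl W leafF) ↔ Y = S.replTD ∧ Z = W := by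
  have hcan : IsCCD S.replTD W (S.repl W leafF) :=
    ⟨(substD_replTD S W).symm, by simpa, by simpa, not_hasT_replTD S, hWT, hWF⟩
  have hdepth {Y' Z'} (h : IsCCD Y' Z' (S.repl W leafF)) : Z' = W ∨ W.depth < Z'.depth :=
    eq_or_depth_lt_of_repl_eq_substD hW h.2.2.2.1 h.2.1 h.2.2.2.2.1 h.2.2.2.2.2 h.1
  constructor
  · rintro ⟨hccd, hmin⟩
    obtain rfl : Z = W := (hdepth hccd).resolve_right (hmin _ _ hcan)
    refine ⟨DTree.eq_of_substD_eq hWT hccd.2.2.2.1 (not_hasT_replTD S) ?_, rfl⟩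
    rw [← hccd.1, substD_replTD]
  · rintro ⟨rfl, rfl⟩
    refine ⟨hcan, fun Y' Z' h' => ?_⟩
    rcases hdepth h' with rfl | hlt
    · exact lt_irrefl _
    · exact hlt.asymm

theorem not_isCDD_repl_leafF (hSF : S.hasF) (hWF : W.hasF) : ¬ IsCDD Y Z (S.repl W leafF) :=
  fun ⟨h, _, hYT, hYF, hZT, _⟩ => not_hasT_of_repl_eq_substD hSF hWF hYF hZT h hYT

theorem isDD_repl_leafT_iff (hST : S.hasT) (hSF : S.hasF) (hW : W.DisjIrreducible)
    (hWT : W.hasT) (hWF : W.hasF) : IsDD Y Z (S.repl leafT W) ↔ Y = S.replFD ∧ Z = W := by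
  rw [← isCD_swap_iff, swap_repl, swap,
    isCD_repl_leafF_iff (by simpa) (by simpa) (by rwa [conjIrreducible_swap_iff]) (by simpa)
      (by simpa), swap_replTD, DTree.swap_involutive.injective.eq_iff,
    swap_involutive.injective.eq_iff]

theorem not_isCCD_repl_leafT (hST : S.hasT) (hWT : W.hasT) : ¬ IsCCD Y Z (S.repl leafT W) := by
  rw [← isCDD_swap_iff, swap_repl, swap]
  exact not_isCDD_repl_leafF (by simpa) (by simpa)

end Decomposition

end ETree

theorem ETree.eq_leafD_of_node_eq_substD {U V Z : ETree A} {a : A} {Y : DTree A}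
    (hU : ¬ (U.hasT ∧ U.hasF)) (hV : ¬ (V.hasT ∧ V.hasF)) (hYD : Y.hasD) (hZT : Z.hasT)
    (hZF : Z.hasF) (h : node U a V = Y.substD Z) : Y = .leafD := by
  cases Y with
  | leafD => rfl
  | node Y₁ b Y₂ =>
    simp only [DTree.substD, node.injEq] at h
    obtain ⟨rfl, -, rfl⟩ := h
    simp only [DTree.hasT_substD, DTree.hasF_substD] at hU hV
    simp only [DTree.hasD] at hYD
    tauto
  | _ => simp at hYD

theorem IsTTerm.not_hasF_se {P : STerm A} (h : IsTTerm P) : ¬ (se P).hasF := by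
  induction h with
  | tt => simp [se]
  | node a _ _ ihP ihQ => simp [se, ETree.hasF_repl, ihP, ihQ]

theorem IsFTerm.not_hasT_se {P : STerm A} (h : IsFTerm P) : ¬ (se P).hasT := by
  induction h with
  | ff => simp [se]
  | node a _ _ ihP ihQ => simp [se, ETree.hasT_repl, ihP, ihQ]

theorem IsLTerm.exists_se_eq_node {P : STerm A} (h : IsLTerm P) :
    ∃ U a V, se P = .node U a V ∧ (¬ U.hasF ∧ ¬ V.hasT ∨ ¬ U.hasT ∧ ¬ V.hasF) := by
  cases h with
  | pos a hP hQ =>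
    exact ⟨_, a, _, rfl, .inl ⟨by simp [ETree.hasF_repl, hP.not_hasF_se], hQ.not_hasT_se⟩⟩
  | neg a hP hQ =>
    exact ⟨_, a, _, rfl, .inr ⟨hQ.not_hasT_se, by simp [ETree.hasF_repl, hP.not_hasF_se]⟩⟩

theorem IsLTerm.hasT_se_and_hasF_se {P : STerm A} (h : IsLTerm P) :
    (se P).hasT ∧ (se P).hasF := by
  obtain ⟨U, a, V, hP, hUV⟩ := h.exists_se_eq_node
  have := U.hasT_or_hasF
  have := V.hasT_or_hasF
  simp only [hP, ETree.hasT, ETree.hasF]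
  tauto

theorem IsLTerm.eq_leafD_of_se_eq_substD {P : STerm A} {Y : DTree A} {Z : ETree A}
    (h : IsLTerm P) (hYD : Y.hasD) (hZT : Z.hasT) (hZF : Z.hasF) (e : se P = Y.substD Z) :
    Y = .leafD := by
  obtain ⟨U, a, V, hP, hUV⟩ := h.exists_se_eq_node
  exact ETree.eq_leafD_of_node_eq_substD (by tauto) (by tauto) hYD hZT hZF (hP ▸ e)

mutual

theorem IsCTerm.hasT_se_and_hasF_se {P : STerm A} : IsCTerm P → (se P).hasT ∧ (se P).hasF
  | .ell h => h.hasT_se_and_hasF_se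
  | .and hP hQ => by
    obtain ⟨hPT, hPF⟩ := hP.hasT_se_and_hasF_se
    obtain ⟨hQT, hQF⟩ := hQ.hasT_se_and_hasF_se
    simp [se, ETree.hasT_repl, ETree.hasF_repl, *]

theorem IsDTerm.hasT_se_and_hasF_se {P : STerm A} : IsDTerm P → (se P).hasT ∧ (se P).hasF
  | .ell h => h.hasT_se_and_hasF_se
  | .or hP hQ => by
    obtain ⟨hPT, hPF⟩ := hP.hasT_se_and_hasF_se
    obtain ⟨hQT, hQF⟩ := hQ.hasT_se_and_hasF_se
    simp [se, ETree.hasT_repl, ETree.hasF_repl, *]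

theorem IsStarTerm.hasT_se_and_hasF_se {P : STerm A} :
    IsStarTerm P → (se P).hasT ∧ (se P).hasF
  | .c h => h.hasT_se_and_hasF_se
  | .d h => h.hasT_se_and_hasF_se

end

mutual

theorem IsCTerm.disjIrreducible_se {P : STerm A} : IsCTerm P → (se P).DisjIrreducible
  | .ell h => fun _ _ _ hYD hZT hZF e => h.eq_leafD_of_se_eq_substD hYD hZT hZF e
  | .and hP hQ =>
    ETree.disjIrreducible_repl_leafF hP.conjIrreducible_se_or_disjIrreducible_se
      hP.hasT_se_and_hasF_se.1 hP.hasT_se_and_hasF_se.2 hQ.conjIrreducible_se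
      hQ.hasT_se_and_hasF_se.1 hQ.hasT_se_and_hasF_se.2

theorem IsDTerm.conjIrreducible_se {P : STerm A} : IsDTerm P → (se P).ConjIrreducible
  | .ell h => fun _ _ _ hYD hZT hZF e => h.eq_leafD_of_se_eq_substD hYD hZT hZF e
  | .or hP hQ =>
    ETree.conjIrreducible_repl_leafT hP.conjIrreducible_se_or_disjIrreducible_se
      hP.hasT_se_and_hasF_se.1 hP.hasT_se_and_hasF_se.2 hQ.disjIrreducible_se
      hQ.hasT_se_and_hasF_se.1 hQ.hasT_se_and_hasF_se.2

theorem IsStarTerm.conjIrreducible_se_or_disjIrreducible_se {P : STerm A} :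
    IsStarTerm P → (se P).ConjIrreducible ∨ (se P).DisjIrreducible
  | .c h => .inr h.disjIrreducible_se
  | .d h => .inl h.conjIrreducible_se

end

end

/-- For a *-term `P ∧❛ Q`, `se(P ∧❛ Q)` has the unique cd `(se(P)[T↦△], se(Q))` and
no dd; for a *-term `P ∨❛ Q`, `se(P ∨❛ Q)` has no cd and the unique dd
`(se(P)[F↦△], se(Q))`. -/
theorem cd_dd_unique {A : Type} [Nonempty A] :
    (∀ P Q : STerm A, IsStarTerm P → IsDTerm Q →
      (∀ (Y : DTree A) (Z : ETree A),
        IsCD Y Z (se (.and P Q)) ↔ Y = (se P).replTD ∧ Z = se Q) ∧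
      ¬ ∃ (Y : DTree A) (Z : ETree A), IsDD Y Z (se (.and P Q))) ∧
    (∀ P Q : STerm A, IsStarTerm P → IsCTerm Q →
      (¬ ∃ (Y : DTree A) (Z : ETree A), IsCD Y Z (se (.or P Q))) ∧
      (∀ (Y : DTree A) (Z : ETree A),
        IsDD Y Z (se (.or P Q)) ↔ Y = (se P).replFD ∧ Z = se Q)) := by
  refine ⟨fun P Q hP hQ => ?_, fun P Q hP hQ => ?_⟩
  · obtain ⟨hPT, hPF⟩ := hP.hasT_se_and_hasF_se
    obtain ⟨hQT, hQF⟩ := hQ.hasT_se_and_hasF_se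
    exact ⟨fun Y Z => ETree.isCD_repl_leafF_iff hPT hPF hQ.conjIrreducible_se hQT hQF,
      fun ⟨_, _, h⟩ => ETree.not_isCDD_repl_leafF hPF hQF h.1⟩
  · obtain ⟨hPT, hPF⟩ := hP.hasT_se_and_hasF_se
    obtain ⟨hQT, hQF⟩ := hQ.hasT_se_and_hasF_se
    exact ⟨fun ⟨_, _, h⟩ => ETree.not_isCCD_repl_leafT hPT hQT h.1,
      fun Y Z => ETree.isDD_repl_leafT_iff hPT hPF hQ.disjIrreducible_se hQT hQF⟩
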